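/- arXiv:1909.11457 — 3 statements merged into one kernel-verified Lean document; each statement's English description precedes it below -/
import Mathlib

section
/- Let a,b,c,d,t be real numbers with b ≠ 0, ad - bc = 1 and u := a + d + |b|(t-1) > 2. Define A(t) as the 2×2 matrix [a + |b|(t-1), b; c + sgn(b)·d·(t-1), d], and φ±(u) = 2d - u ± sqrt(u² - 4). Then the vector e±(t) = (2b, φ±(u)) is an eigenvector of A(t) with eigenvalue μ±(t) = (u ± sqrt(u²-4))/2. -/
theorem stmt1 (a b c d t u : ℝ) (hb : b ≠ 0)
    (hdet : a * d - b * c = 1)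
    (hu : u = a + d + |b| * (t - 1)) (hu2 : u > 2) :
    ((Matrix.mulVec !![a + |b| * (t - 1), b; c + Real.sign b * d * (t - 1), d]
        ![2 * b, 2 * d - u + Real.sqrt (u ^ 2 - 4)] =
        ((u + Real.sqrt (u ^ 2 - 4)) / 2) • ![2 * b, 2 * d - u + Real.sqrt (u ^ 2 - 4)]) ∧
      ![2 * b, 2 * d - u + Real.sqrt (u ^ 2 - 4)] ≠ 0) ∧
    ((Matrix.mulVec !![a + |b| * (t - 1), b; c + Real.sign b * d * (t - 1), d]
        ![2 * b, 2 * d - u - Real.sqrt (u ^ 2 - 4)] =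
        ((u - Real.sqrt (u ^ 2 - 4)) / 2) • ![2 * b, 2 * d - u - Real.sqrt (u ^ 2 - 4)]) ∧
      ![2 * b, 2 * d - u - Real.sqrt (u ^ 2 - 4)] ≠ 0) := by
  set s := Real.sqrt (u ^ 2 - 4) with hs
  have hs2 : s ^ 2 = u ^ 2 - 4 := Real.sq_sqrt (by nlinarith)
  have hsb : Real.sign b * b = |b| := by
    rcases lt_or_gt_of_ne hb with h | h
    · rw [Real.sign_of_neg h, abs_of_neg h]; ring
    · rw [Real.sign_of_pos h, abs_of_pos h]; ring
  have hnz : ∀ x : ℝ, ![2 * b, x] ≠ 0 := by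
    intro x h
    have := congrFun h 0
    simp at this
    exact hb this
  have hab : |b| * (t - 1) = u - a - d := by linarith
  refine ⟨⟨?_, hnz _⟩, ⟨?_, hnz _⟩⟩ <;> funext i <;> fin_cases i
  · simp [Matrix.mulVec, dotProduct]
    linear_combination 2*b*hab
  · simp [Matrix.mulVec, dotProduct]
    linear_combination (-2)*hdet + 2*d*(t-1)*hsb + 2*d*hab - (1/2)*hs2
  · simp [Matrix.mulVec, dotProduct]
    linear_combination 2*b*hab
  · simp [Matrix.mulVec, dotProduct]
    linear_combination (-2)*hdet + 2*d*(t-1)*hsb + 2*d*hab - (1/2)*hs2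
end

section
/- Let a,b,c,d be integers with b ≠ 0, ad - bc = 1 and a + d > 2, and let t be a real number with a + d + |b|(t-1) > 2. Let A(t) = [a + |b|(t-1), b; c + sgn(b)·d·(t-1), d] and v⁺_max = (b, d). Then ‖A(t)·v⁺_max‖² ≥ 4b² + (2d-1)², and consequently ‖A(t)·v⁺_max‖² ≥ (1 + (3b² + 3d² - 4d + 1)/(b² + d²))·‖v⁺_max‖², where ‖·‖ is the Euclidean norm on ℝ². -/
theorem stmt3 (a b c d : ℤ) (t : ℝ) (hb : b ≠ 0)
    (hdet : a * d - b * c = 1) (htr : a + d > 2)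
    (ht : (a : ℝ) + d + |(b : ℝ)| * (t - 1) > 2) :
    ((Matrix.mulVec !![(a : ℝ) + |(b : ℝ)| * (t - 1), (b : ℝ);
        (c : ℝ) + Real.sign (b : ℝ) * d * (t - 1), (d : ℝ)] ![(b : ℝ), (d : ℝ)] 0) ^ 2 +
      (Matrix.mulVec !![(a : ℝ) + |(b : ℝ)| * (t - 1), (b : ℝ);
        (c : ℝ) + Real.sign (b : ℝ) * d * (t - 1), (d : ℝ)] ![(b : ℝ), (d : ℝ)] 1) ^ 2 ≥
      4 * (b : ℝ) ^ 2 + (2 * (d : ℝ) - 1) ^ 2) ∧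
    ((Matrix.mulVec !![(a : ℝ) + |(b : ℝ)| * (t - 1), (b : ℝ);
        (c : ℝ) + Real.sign (b : ℝ) * d * (t - 1), (d : ℝ)] ![(b : ℝ), (d : ℝ)] 0) ^ 2 +
      (Matrix.mulVec !![(a : ℝ) + |(b : ℝ)| * (t - 1), (b : ℝ);
        (c : ℝ) + Real.sign (b : ℝ) * d * (t - 1), (d : ℝ)] ![(b : ℝ), (d : ℝ)] 1) ^ 2 ≥
      (1 + (3 * (b : ℝ) ^ 2 + 3 * (d : ℝ) ^ 2 - 4 * (d : ℝ) + 1) / ((b : ℝ) ^ 2 + (d : ℝ) ^ 2)) *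
        ((b : ℝ) ^ 2 + (d : ℝ) ^ 2)) := by
  have hbR : (b : ℝ) ≠ 0 := Int.cast_ne_zero.mpr hb
  have hsb : Real.sign (b : ℝ) * (b : ℝ) = |(b : ℝ)| := by
    rcases hbR.lt_or_gt with h | h
    · rw [Real.sign_of_neg h, abs_of_neg h]; ring
    · rw [Real.sign_of_pos h, abs_of_pos h]; ring
  set u : ℝ := (a : ℝ) + d + |(b : ℝ)| * (t - 1) with hu
  have hdetR : (a : ℝ) * d - b * c = 1 := by exact_mod_cast hdet
  have e0 : Matrix.mulVec !![(a : ℝ) + |(b : ℝ)| * (t - 1), (b : ℝ);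
      (c : ℝ) + Real.sign (b : ℝ) * d * (t - 1), (d : ℝ)] ![(b : ℝ), (d : ℝ)] 0 = b * u := by
    simp [Matrix.mulVec, dotProduct, Fin.sum_univ_two, hu]
    ring
  have e1 : Matrix.mulVec !![(a : ℝ) + |(b : ℝ)| * (t - 1), (b : ℝ);
      (c : ℝ) + Real.sign (b : ℝ) * d * (t - 1), (d : ℝ)] ![(b : ℝ), (d : ℝ)] 1 = d * u - 1 := by
    simp [Matrix.mulVec, dotProduct, Fin.sum_univ_two, hu]
    linear_combination ((d : ℝ) * (t - 1)) * hsb - hdetR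
  rw [e0, e1]
  have hx : (0:ℝ) < u - 2 := by linarith
  have key : (b : ℝ) * u ^ 2 * b + (d * u - 1) ^ 2 ≥ 4 * (b : ℝ) ^ 2 + (2 * d - 1) ^ 2 := by
    have h1 : (0:ℝ) ≤ (b : ℝ) ^ 2 * ((u - 2) * (u + 2)) :=
      mul_nonneg (sq_nonneg _) (mul_nonneg hx.le (by linarith))
    rcases le_or_gt 1 d with hd | hd
    · have hdR : (1 : ℝ) ≤ (d : ℝ) := by exact_mod_cast hd
      have hdu : (0:ℝ) ≤ (d : ℝ) * u + 2 * d - 2 := by nlinarith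
      have h2 : (0:ℝ) ≤ (d : ℝ) * ((u - 2) * ((d : ℝ) * u + 2 * d - 2)) :=
        mul_nonneg (by linarith) (mul_nonneg hx.le hdu)
      nlinarith [h1, h2]
    · have hd0 : d ≤ 0 := by omega
      have hdR : (d : ℝ) ≤ 0 := by exact_mod_cast hd0
      have hdu : (d : ℝ) * u + 2 * d - 2 ≤ 0 := by nlinarith
      have h2 : (0:ℝ) ≤ (d : ℝ) * ((u - 2) * ((d : ℝ) * u + 2 * d - 2)) :=
        mul_nonneg_of_nonpos_of_nonpos hdR (mul_nonpos_iff.mpr (Or.inl ⟨hx.le, hdu⟩))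
      nlinarith [h1, h2]
  constructor
  · nlinarith [key]
  · have hS : (0:ℝ) < (b : ℝ) ^ 2 + (d : ℝ) ^ 2 := by positivity
    have : (1 + (3 * (b : ℝ) ^ 2 + 3 * (d : ℝ) ^ 2 - 4 * (d : ℝ) + 1) / ((b : ℝ) ^ 2 + (d : ℝ) ^ 2)) *
        ((b : ℝ) ^ 2 + (d : ℝ) ^ 2) = 4 * (b : ℝ) ^ 2 + (2 * d - 1) ^ 2 := by
      field_simp
      ring
    rw [this]
    nlinarith [key]
end

section
/- Let α ∈ (0, 1/3) and ε ∈ (0,1) with (1+α)/(1-ε)^{2(1+α)} < 4/3, and let ρ = ρ(α,ε) be the larger root of (1+α)ρ²/2 + ((1-ε)^{2(1+α)} + 1+α)ρ + (1+α)/2 = 0. Then ρ⁻² - (1 + 2(1+α)/(1-ε)^{2(1+α)}) ≥ 0. -/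
set_option maxHeartbeats 1000000


theorem stmt15 (α ε ρ : ℝ) (hα : α ∈ Set.Ioo (0 : ℝ) (1/3)) (hε : ε ∈ Set.Ioo (0 : ℝ) 1)
    (hc : (1 + α) / (1 - ε) ^ (2 * (1 + α)) < 4 / 3)
    (hρroot : (1 + α) * ρ ^ 2 / 2 + ((1 - ε) ^ (2 * (1 + α)) + 1 + α) * ρ + (1 + α) / 2 = 0)
    (hρlarger : ρ = (-((1 - ε) ^ (2 * (1 + α)) + 1 + α) +
        Real.sqrt (((1 - ε) ^ (2 * (1 + α)) + 1 + α) ^ 2 - (1 + α) ^ 2)) / (1 + α)) :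
    1 / ρ ^ 2 - (1 + 2 * (1 + α) / (1 - ε) ^ (2 * (1 + α))) ≥ 0 := by
  obtain ⟨hα0, hα1⟩ := hα
  obtain ⟨hε0, hε1⟩ := hε
  obtain ⟨b, hbdef⟩ : ∃ b : ℝ, (1 - ε) ^ (2 * (1 + α)) = b := ⟨_, rfl⟩
  rw [hbdef] at hc hρroot hρlarger ⊢
  have hb : 0 < b := hbdef ▸ Real.rpow_pos_of_pos (by linarith) _
  have ha : (0:ℝ) < 1 + α := by linarith
  have hab : 3 * (1 + α) < 4 * b := by
    have h := (div_lt_iff₀ hb).mp hc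
    nlinarith
  have hD2 : ((b + 1 + α) ^ 2 - (1 + α) ^ 2) = b ^ 2 + 2 * (1 + α) * b := by ring
  have hDnn : (0:ℝ) ≤ b ^ 2 + 2 * (1 + α) * b := by nlinarith
  have hpos : (0:ℝ) < b + 2 * (1 + α) := by linarith
  have h1 : (1 + α) ^ 2 < b ^ 2 + 2 * (1 + α) * b := by nlinarith
  -- sqrt lower bound
  have hs : (b ^ 2 + 3 * (1 + α) * b + (1 + α) ^ 2) / (b + 2 * (1 + α)) ≤
      Real.sqrt ((b + 1 + α) ^ 2 - (1 + α) ^ 2) := by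
    rw [hD2]
    apply Real.le_sqrt_of_sq_le
    rw [div_pow, div_le_iff₀ (pow_pos hpos 2)]
    nlinarith [mul_lt_mul_of_pos_left h1 (mul_pos ha ha)]
  -- sqrt upper bound
  have hsu : Real.sqrt ((b + 1 + α) ^ 2 - (1 + α) ^ 2) < b + 1 + α := by
    rw [hD2]
    have := Real.sqrt_lt' (x := b ^ 2 + 2 * (1 + α) * b) (y := b + 1 + α) (by linarith)
    rw [this]
    nlinarith
  -- ρ is negative
  have hρneg : ρ < 0 := by
    rw [hρlarger]
    apply div_neg_of_neg_of_pos _ ha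
    linarith
  have hρ2 : 0 < ρ ^ 2 := by nlinarith
  -- lower bound on ρ
  have hρlb : -(1 + α) ≤ ρ * (b + 2 * (1 + α)) := by
    rw [hρlarger]
    rw [div_mul_eq_mul_div, le_div_iff₀ ha]
    nlinarith [hs, (div_le_iff₀ hpos).mp hs]
  -- key inequality
  have key : ρ ^ 2 * (b + 2 * (1 + α)) ≤ b := by
    nlinarith [hρroot, hρlb, ha]
  have final : 1 + 2 * (1 + α) / b ≤ 1 / ρ ^ 2 := by
    rw [show (1:ℝ) + 2 * (1 + α) / b = (b + 2 * (1 + α)) / b by field_simp]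
    rw [div_le_div_iff₀ hb hρ2]
    nlinarith [key]
  linarith
end
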